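/- arXiv:2402.06465 — 2 statements merged into one kernel-verified Lean document; each statement's English description precedes it below -/
import Mathlib

section
/- Let X = Y + Z where Y ∈ ℝ^{n×d} has rank k and the row space of Y is orthogonal to the row space of Z. Let V and V̂ be the top-k right singular subspaces of Y and X respectively. If σ_k(Y)² ≥ 2‖Z‖², then ‖Π_V − Π_{V̂}‖_F ≤ 2√2·‖Z‖_F/σ_k(Y). -/
open MeasureTheory Finset
open scoped RealInnerProductSpace

noncomputable section
open Classical

def frobNorm {I J : Type*} [Fintype I] [Fintype J] (A : Matrix I J ℝ) : ℝ :=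
  Real.sqrt (∑ i, ∑ j, (A i j) ^ 2)

def norm2 {I : Type*} [Fintype I] (v : I → ℝ) : ℝ := Real.sqrt (∑ j, (v j) ^ 2)

def specNorm {I : Type*} [Fintype I] {d : ℕ} (A : Matrix I (Fin d) ℝ) : ℝ :=
  sSup {s | ∃ v : Fin d → ℝ, norm2 v = 1 ∧ s = norm2 (A.mulVec v)}

/-- `singVal A k` is the `k`-th largest singular value of `A` (1-based),
via the Courant–Fischer min-max principle. -/
def singVal {I : Type*} [Fintype I] {d : ℕ} (A : Matrix I (Fin d) ℝ) (k : ℕ) : ℝ :=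
  sSup {r | ∃ E : Submodule ℝ (Fin d → ℝ), Module.finrank ℝ E = k ∧
    r = sInf {s | ∃ v ∈ E, norm2 v = 1 ∧ s = norm2 (A.mulVec v)}}

def IsProjOfRank {d : ℕ} (P : Matrix (Fin d) (Fin d) ℝ) (k : ℕ) : Prop :=
  P.transpose = P ∧ P * P = P ∧ P.rank = k

/-- `P` is an orthogonal projection onto a top-`k` right-singular (row) subspace of `A`:
it is a rank-`k` orthogonal projection maximizing `‖A P'‖_F` among rank-`k` projections. -/
def IsTopKProj {I : Type*} [Fintype I] {d : ℕ} (A : Matrix I (Fin d) ℝ) (k : ℕ)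
    (P : Matrix (Fin d) (Fin d) ℝ) : Prop :=
  IsProjOfRank P k ∧ ∀ P', IsProjOfRank P' k → frobNorm (A * P') ≤ frobNorm (A * P)

/-!
Write `P = Π_V` and `Q = Π_{V̂}`. The projection onto the row space of `Y` attains
`‖Y‖_F = max ‖Y P'‖_F`, so the optimality of `P` forces `Y P = Y` and `range P = row Y`.
Testing the optimality of `Q` for `X` against `P` gives
`‖X (1 - Q)‖_F ≤ ‖X (1 - P)‖_F = ‖Z (1 - P)‖_F ≤ ‖Z‖_F`, hence `‖Y (1 - Q)‖_F ≤ 2 ‖Z‖_F`.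
The columns of `P (1 - Q)` lie in `row Y`, on which `Y` stretches every vector by at least
`σ_k(Y)` (Courant–Fischer), so `σ_k(Y) ‖P (1 - Q)‖_F ≤ ‖Y P (1 - Q)‖_F ≤ 2 ‖Z‖_F`.
Finally `‖P - Q‖_F² = 2 ‖P (1 - Q)‖_F²` because `tr P = tr Q = k`.
-/

open Matrix

section Norm2

variable {I : Type*} [Fintype I]

theorem norm2_eq_norm (v : I → ℝ) : norm2 v = ‖(WithLp.toLp 2 v : EuclideanSpace ℝ I)‖ := by
  simp [norm2, EuclideanSpace.norm_eq]

theorem norm2_nonneg (v : I → ℝ) : 0 ≤ norm2 v := Real.sqrt_nonneg _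

theorem norm2_sq (v : I → ℝ) : norm2 v ^ 2 = v ⬝ᵥ v := by
  rw [norm2, Real.sq_sqrt (by positivity)]
  simp only [dotProduct, sq]

theorem norm2_smul (c : ℝ) (v : I → ℝ) : norm2 (c • v) = |c| * norm2 v := by
  rw [norm2_eq_norm, norm2_eq_norm, WithLp.toLp_smul, norm_smul, Real.norm_eq_abs]

theorem norm2_eq_zero {v : I → ℝ} : norm2 v = 0 ↔ v = 0 := by
  rw [norm2_eq_norm, norm_eq_zero, WithLp.toLp_eq_zero]

theorem norm2_pos {v : I → ℝ} : 0 < norm2 v ↔ v ≠ 0 := by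
  rw [norm2_eq_norm, norm_pos_iff, Ne, WithLp.toLp_eq_zero]

theorem continuous_norm2 : Continuous (norm2 : (I → ℝ) → ℝ) := by
  simp only [funext norm2_eq_norm]
  fun_prop

end Norm2

namespace Matrix

variable {I J : Type*}

section Frobenius

variable [Fintype I] [Fintype J]

section NormedGroup

attribute [local instance] Matrix.frobeniusNormedAddCommGroup

theorem frobNorm_eq_norm (A : Matrix I J ℝ) : frobNorm A = ‖A‖ := by
  simp [frobNorm, frobenius_norm_def, Real.sqrt_eq_rpow]

theorem frobNorm_sub_le (A B : Matrix I J ℝ) : frobNorm (A - B) ≤ frobNorm A + frobNorm B := by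
  simpa only [frobNorm_eq_norm] using norm_sub_le A B

theorem frobNorm_eq_zero {A : Matrix I J ℝ} : frobNorm A = 0 ↔ A = 0 := by
  rw [frobNorm_eq_norm, norm_eq_zero]

end NormedGroup

theorem frobNorm_nonneg (A : Matrix I J ℝ) : 0 ≤ frobNorm A := Real.sqrt_nonneg _

theorem frobNorm_sq (A : Matrix I J ℝ) : frobNorm A ^ 2 = ∑ i, ∑ j, A i j ^ 2 :=
  Real.sq_sqrt (by positivity)

theorem frobNorm_sq_eq_trace (A : Matrix I J ℝ) : frobNorm A ^ 2 = (A * Aᵀ).trace := by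
  rw [frobNorm_sq]
  simp only [trace, diag_apply, mul_apply, transpose_apply, sq]

theorem frobNorm_sq_eq_sum_norm2_sq [DecidableEq J] (A : Matrix I J ℝ) :
    frobNorm A ^ 2 = ∑ j, norm2 (A *ᵥ Pi.single j 1) ^ 2 := by
  rw [frobNorm_sq, Finset.sum_comm]
  refine Finset.sum_congr rfl fun j _ => ?_
  rw [norm2, Real.sq_sqrt (by positivity), mulVec_single_one]
  rfl

end Frobenius

theorem trace_eq_rank_of_isIdempotentElem [Fintype J] [DecidableEq J] {K : Type*} [Field K]
    {P : Matrix J J K} (hP : IsIdempotentElem P) : P.trace = P.rank := by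
  have hproj : LinearMap.IsProj (LinearMap.range P.toLin') P.toLin' :=
    (LinearMap.isProj_range_iff_isIdempotentElem _).2 (hP.map toLinAlgEquiv')
  rw [← trace_toLin'_eq, hproj.trace]
  rfl

section OrthogonalProjection

variable [Fintype I] [Fintype J] [DecidableEq J] {P Q : Matrix J J ℝ}

theorem frobNorm_sq_eq_add_of_isIdempotentElem (M : Matrix I J ℝ) (hPs : P.IsSymm)
    (hP : IsIdempotentElem P) :
    frobNorm M ^ 2 = frobNorm (M * P) ^ 2 + frobNorm (M * (1 - P)) ^ 2 := by
  have hPPt : P * Pᵀ = P := by rw [hPs.eq, hP.eq]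
  have hRRt : (1 - P) * (1 - P)ᵀ = 1 - P := by rw [(isSymm_one.sub hPs).eq, hP.one_sub.eq]
  rw [frobNorm_sq_eq_trace, frobNorm_sq_eq_trace, frobNorm_sq_eq_trace, ← trace_add,
    transpose_mul, transpose_mul, Matrix.mul_assoc, ← Matrix.mul_assoc P, hPPt,
    Matrix.mul_assoc M, ← Matrix.mul_assoc (1 - P), hRRt, ← Matrix.mul_add, ← Matrix.add_mul,
    add_sub_cancel, Matrix.one_mul]

theorem frobNorm_mul_le_of_isIdempotentElem (M : Matrix I J ℝ) (hPs : P.IsSymm)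
    (hP : IsIdempotentElem P) : frobNorm (M * P) ≤ frobNorm M := by
  have h := frobNorm_sq_eq_add_of_isIdempotentElem M hPs hP
  exact (pow_le_pow_iff_left₀ (frobNorm_nonneg _) (frobNorm_nonneg _) two_ne_zero).1
    (by nlinarith)

theorem frobNorm_sub_eq_of_trace_eq (hPs : P.IsSymm) (hP : IsIdempotentElem P)
    (hQs : Q.IsSymm) (hQ : IsIdempotentElem Q) (htr : P.trace = Q.trace) :
    frobNorm (P - Q) = √2 * frobNorm (P * (1 - Q)) := by
  have hsq : frobNorm (P - Q) ^ 2 = 2 * frobNorm (P * (1 - Q)) ^ 2 := by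
    have hRRt : (1 - Q) * (1 - Q)ᵀ = 1 - Q := by rw [(isSymm_one.sub hQs).eq, hQ.one_sub.eq]
    have hPQP : (P * (Q * P)).trace = (P * Q).trace := by
      rw [trace_mul_comm, Matrix.mul_assoc, hP.eq, trace_mul_comm]
    rw [frobNorm_sq_eq_trace, frobNorm_sq_eq_trace, transpose_mul, Matrix.mul_assoc,
      ← Matrix.mul_assoc (1 - Q), hRRt, hPs.eq, transpose_sub, hPs.eq, hQs.eq]
    simp only [Matrix.sub_mul, Matrix.mul_sub, Matrix.one_mul, hP.eq, hQ.eq, trace_sub,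
      trace_mul_comm Q P, hPQP, htr]
    ring
  rw [← Real.sqrt_sq (frobNorm_nonneg (P - Q)), hsq, Real.sqrt_mul zero_le_two,
    Real.sqrt_sq (frobNorm_nonneg _)]

end OrthogonalProjection

section OrthProjMatrix

variable [Fintype J] [DecidableEq J]

def orthProjMatrix (U : Submodule ℝ (J → ℝ)) : Matrix J J ℝ :=
  (toEuclideanCLM (n := J) (𝕜 := ℝ)).symm
    (U.comap (WithLp.linearEquiv 2 ℝ (J → ℝ)).toLinearMap).starProjection

variable (U : Submodule ℝ (J → ℝ))

theorem isStarProjection_orthProjMatrix : IsStarProjection (orthProjMatrix U) :=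
  isStarProjection_starProjection.map (toEuclideanCLM (n := J) (𝕜 := ℝ)).symm.toStarAlgHom

theorem isSymm_orthProjMatrix : (orthProjMatrix U).IsSymm := by
  have h := (isStarProjection_orthProjMatrix U).isSelfAdjoint
  rwa [IsSelfAdjoint, star_eq_conjTranspose, conjTranspose_eq_transpose_of_trivial] at h

theorem orthProjMatrix_mulVec (v : J → ℝ) :
    orthProjMatrix U *ᵥ v =
      (U.comap (WithLp.linearEquiv 2 ℝ (J → ℝ)).toLinearMap).starProjection (WithLp.toLp 2 v) := by
  rw [← ofLp_toEuclideanCLM, orthProjMatrix, StarAlgEquiv.apply_symm_apply]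

theorem orthProjMatrix_mulVec_mem (v : J → ℝ) : orthProjMatrix U *ᵥ v ∈ U := by
  rw [orthProjMatrix_mulVec]
  exact (U.comap (WithLp.linearEquiv 2 ℝ (J → ℝ)).toLinearMap).starProjection_apply_mem _

theorem orthProjMatrix_mulVec_of_mem {v : J → ℝ} (hv : v ∈ U) : orthProjMatrix U *ᵥ v = v := by
  rw [orthProjMatrix_mulVec, Submodule.starProjection_eq_self_iff.2 hv]

theorem rank_orthProjMatrix : (orthProjMatrix U).rank = Module.finrank ℝ U := by
  have hrange : LinearMap.range (orthProjMatrix U).mulVecLin = U :=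
    le_antisymm (LinearMap.range_le_iff_comap.2 (by ext; simp [orthProjMatrix_mulVec_mem]))
      fun v hv => ⟨v, orthProjMatrix_mulVec_of_mem U hv⟩
  rw [rank, hrange]

end OrthProjMatrix

section RowSpace

def rowSpace (A : Matrix I J ℝ) : Submodule ℝ (J → ℝ) := Submodule.span ℝ (Set.range A.row)

theorem row_mem_rowSpace (A : Matrix I J ℝ) (i : I) : A i ∈ rowSpace A :=
  Submodule.subset_span ⟨i, rfl⟩

variable [Fintype J]

theorem finrank_rowSpace [Finite I] (A : Matrix I J ℝ) :
    Module.finrank ℝ (rowSpace A) = A.rank :=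
  (rank_eq_finrank_span_row A).symm

theorem rowSpace_ne_bot [Finite I] {A : Matrix I J ℝ} (hA : 0 < A.rank) : rowSpace A ≠ ⊥ := by
  intro h
  have := finrank_rowSpace A
  rw [h, finrank_bot] at this
  omega

theorem dotProduct_eq_zero_of_mem_rowSpace {A : Matrix I J ℝ} {v x : J → ℝ}
    (hv : v ∈ rowSpace A) (hx : A *ᵥ x = 0) : v ⬝ᵥ x = 0 := by
  induction hv using Submodule.span_induction with
  | mem _ hrow =>
    obtain ⟨i, rfl⟩ := hrow
    exact congrFun hx i
  | zero => exact zero_dotProduct x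
  | add u w _ _ hu hw => rw [add_dotProduct, hu, hw, add_zero]
  | smul c u _ hu => rw [smul_dotProduct, hu, smul_zero]

theorem norm2_le_of_mem_rowSpace {A : Matrix I J ℝ} {v w : J → ℝ} (hv : v ∈ rowSpace A)
    (h : A *ᵥ w = A *ᵥ v) : norm2 v ≤ norm2 w := by
  have horth : v ⬝ᵥ (w - v) = 0 :=
    dotProduct_eq_zero_of_mem_rowSpace hv (by rw [mulVec_sub, h, sub_self])
  have hsq : norm2 w ^ 2 = norm2 v ^ 2 + norm2 (w - v) ^ 2 := by
    simp only [norm2_sq, dotProduct_sub, sub_dotProduct, dotProduct_comm w v] at horth ⊢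
    linarith
  exact (pow_le_pow_iff_left₀ (norm2_nonneg _) (norm2_nonneg _) two_ne_zero).1
    (by nlinarith)

theorem mul_eq_self_iff_mulVec_row {A : Matrix I J ℝ} {P : Matrix J J ℝ} (hP : P.IsSymm) :
    A * P = A ↔ ∀ i, P *ᵥ A i = A i := by
  have hrow : ∀ i, (A * P) i = P *ᵥ A i := fun i => by
    rw [mul_apply_eq_vecMul, ← mulVec_transpose, hP.eq]
  simp only [← hrow]
  exact funext_iff

theorem mul_orthProjMatrix_rowSpace [DecidableEq J] (A : Matrix I J ℝ) :
    A * orthProjMatrix (rowSpace A) = A :=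
  (mul_eq_self_iff_mulVec_row (isSymm_orthProjMatrix _)).2 fun i =>
    orthProjMatrix_mulVec_of_mem _ (row_mem_rowSpace A i)

end RowSpace

section MinGain

variable [Fintype I] [Fintype J]

def minGain (A : Matrix I J ℝ) (E : Submodule ℝ (J → ℝ)) : ℝ :=
  sInf {s | ∃ v ∈ E, norm2 v = 1 ∧ s = norm2 (A *ᵥ v)}

variable {A : Matrix I J ℝ} {E : Submodule ℝ (J → ℝ)}

theorem minGain_nonneg : 0 ≤ minGain A E :=
  Real.sInf_nonneg <| by
    rintro _ ⟨v, -, -, rfl⟩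
    exact norm2_nonneg _

theorem minGain_le_div {v : J → ℝ} (hv : v ∈ E) (hv0 : v ≠ 0) :
    minGain A E ≤ norm2 (A *ᵥ v) / norm2 v := by
  have hpos := norm2_pos.2 hv0
  refine csInf_le ⟨0, ?_⟩ ⟨(norm2 v)⁻¹ • v, E.smul_mem _ hv, ?_, ?_⟩
  · rintro _ ⟨u, -, -, rfl⟩
    exact norm2_nonneg _
  · rw [norm2_smul, abs_of_pos (inv_pos.2 hpos), inv_mul_cancel₀ hpos.ne']
  · rw [mulVec_smul, norm2_smul, abs_of_pos (inv_pos.2 hpos), inv_mul_eq_div]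

theorem minGain_mul_norm2_le {v : J → ℝ} (hv : v ∈ E) :
    minGain A E * norm2 v ≤ norm2 (A *ᵥ v) := by
  rcases eq_or_ne v 0 with rfl | hv0
  · rw [norm2_eq_zero.2 rfl, mul_zero]
    exact norm2_nonneg _
  · exact (le_div_iff₀ (norm2_pos.2 hv0)).1 (minGain_le_div hv hv0)

theorem exists_norm2_eq_one (hE : E ≠ ⊥) : ∃ v ∈ E, norm2 v = 1 := by
  obtain ⟨v, hv, hv0⟩ := Submodule.exists_mem_ne_zero_of_ne_bot hE
  have hpos := norm2_pos.2 hv0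
  refine ⟨(norm2 v)⁻¹ • v, E.smul_mem _ hv, ?_⟩
  rw [norm2_smul, abs_of_pos (inv_pos.2 hpos), inv_mul_cancel₀ hpos.ne']

theorem le_minGain {c : ℝ} (hE : E ≠ ⊥) (h : ∀ v ∈ E, norm2 v = 1 → c ≤ norm2 (A *ᵥ v)) :
    c ≤ minGain A E := by
  obtain ⟨v, hv, hv1⟩ := exists_norm2_eq_one hE
  refine le_csInf ⟨_, v, hv, hv1, rfl⟩ ?_
  rintro _ ⟨u, hu, hu1, rfl⟩
  exact h u hu hu1

theorem minGain_pos (hE : E ≠ ⊥) (hA : ∀ v ∈ E, A *ᵥ v = 0 → v = 0) : 0 < minGain A E := by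
  set S : Set (J → ℝ) := {v | v ∈ E ∧ norm2 v = 1}
  have hS : IsCompact S := by
    refine Metric.isCompact_of_isClosed_isBounded
      ((Submodule.closed_of_finiteDimensional E).inter (isClosed_eq continuous_norm2
        continuous_const)) (Metric.isBounded_iff_subset_closedBall 0 |>.2 ⟨1, ?_⟩)
    rintro v ⟨-, hv1⟩
    rw [Metric.mem_closedBall, dist_zero_right, pi_norm_le_iff_of_nonneg zero_le_one]
    intro i
    simpa [← hv1, norm2_eq_norm] using PiLp.norm_apply_le (WithLp.toLp 2 v) i
  have himage : {s | ∃ v ∈ E, norm2 v = 1 ∧ s = norm2 (A *ᵥ v)} =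
      (norm2 ∘ A.mulVecLin) '' S := by
    ext s
    simp [S, and_assoc, eq_comm]
  obtain ⟨v, hv1⟩ := exists_norm2_eq_one hE
  obtain ⟨u, ⟨huE, hu1⟩, hu⟩ := (hS.image (continuous_norm2.comp
    A.mulVecLin.continuous_of_finiteDimensional)).sInf_mem ⟨_, v, hv1, rfl⟩
  rw [minGain, himage, ← hu]
  refine norm2_pos.2 fun h => ?_
  rw [hA u huE h, norm2_eq_zero.2 rfl] at hu1
  exact zero_ne_one hu1

theorem minGain_mul_frobNorm_le {K : Type*} [Fintype K] [DecidableEq K] {M : Matrix J K ℝ}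
    (hM : LinearMap.range M.mulVecLin ≤ E) : minGain A E * frobNorm M ≤ frobNorm (A * M) := by
  have hsq : (minGain A E * frobNorm M) ^ 2 ≤ frobNorm (A * M) ^ 2 := by
    rw [mul_pow, frobNorm_sq_eq_sum_norm2_sq, frobNorm_sq_eq_sum_norm2_sq, Finset.mul_sum]
    refine Finset.sum_le_sum fun j _ => ?_
    rw [← mul_pow, ← mulVec_mulVec]
    exact pow_le_pow_left₀ (mul_nonneg minGain_nonneg (norm2_nonneg _))
      (minGain_mul_norm2_le (hM ⟨_, rfl⟩)) 2
  exact (pow_le_pow_iff_left₀ (mul_nonneg minGain_nonneg (frobNorm_nonneg _))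
    (frobNorm_nonneg _) two_ne_zero).1 hsq

theorem minGain_rowSpace_pos (hA : 0 < A.rank) : 0 < minGain A (rowSpace A) :=
  minGain_pos (rowSpace_ne_bot hA) fun _ hv hAv =>
    dotProduct_self_eq_zero.1 (dotProduct_eq_zero_of_mem_rowSpace hv hAv)

/-- Courant–Fischer. If `E` meets `ker A` its gain is `0`; otherwise `A E = range A`, and each
unit `v ∈ rowSpace A` has a preimage in `E` of norm at least `1`. -/
theorem minGain_le_minGain_rowSpace (hA : 0 < A.rank) (hE : Module.finrank ℝ E = A.rank) :
    minGain A E ≤ minGain A (rowSpace A) := by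
  by_cases hker : ∃ w ∈ E, w ≠ 0 ∧ A *ᵥ w = 0
  · obtain ⟨w, hw, hw0, hAw⟩ := hker
    calc minGain A E ≤ norm2 (A *ᵥ w) / norm2 w := minGain_le_div hw hw0
      _ = 0 := by rw [hAw, norm2_eq_zero.2 rfl, zero_div]
      _ ≤ minGain A (rowSpace A) := minGain_nonneg
  push Not at hker
  have hinj : Function.Injective (A.mulVecLin.domRestrict E) := by
    rw [← LinearMap.ker_eq_bot, LinearMap.ker_eq_bot']
    intro w hw
    by_contra hw0
    exact hker w w.2 (fun h => hw0 (Subtype.ext h)) hw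
  have hmap : E.map A.mulVecLin = LinearMap.range A.mulVecLin := by
    refine Submodule.eq_of_le_of_finrank_eq LinearMap.map_le_range ?_
    rw [← LinearMap.range_domRestrict, LinearMap.finrank_range_of_inj hinj, hE]
    rfl
  refine le_minGain (rowSpace_ne_bot hA) fun v hv hv1 => ?_
  obtain ⟨w, hw, hAw⟩ : A *ᵥ v ∈ E.map A.mulVecLin := hmap ▸ LinearMap.mem_range_self _ v
  have hw1 : 1 ≤ norm2 w := hv1 ▸ norm2_le_of_mem_rowSpace hv hAw
  calc minGain A E ≤ minGain A E * norm2 w := le_mul_of_one_le_right minGain_nonneg hw1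
    _ ≤ norm2 (A *ᵥ w) := minGain_mul_norm2_le hw
    _ = norm2 (A *ᵥ v) := by rw [← hAw]; rfl

end MinGain

end Matrix

variable {I : Type*} [Fintype I] {d : ℕ}

theorem singVal_nonneg (A : Matrix I (Fin d) ℝ) (k : ℕ) : 0 ≤ singVal A k :=
  Real.sSup_nonneg <| by
    rintro _ ⟨E, -, rfl⟩
    exact minGain_nonneg

theorem singVal_rank_eq_minGain_rowSpace {A : Matrix I (Fin d) ℝ} (hA : 0 < A.rank) :
    singVal A A.rank = minGain A (rowSpace A) := by
  refine IsGreatest.csSup_eq ⟨⟨rowSpace A, finrank_rowSpace A, rfl⟩, ?_⟩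
  rintro _ ⟨E, hE, rfl⟩
  exact minGain_le_minGain_rowSpace hA hE

section TopKProj

variable {P : Matrix (Fin d) (Fin d) ℝ} {k : ℕ}

theorem IsProjOfRank.isSymm (hP : IsProjOfRank P k) : P.IsSymm := hP.1

theorem IsProjOfRank.isIdempotentElem (hP : IsProjOfRank P k) : IsIdempotentElem P := hP.2.1

theorem IsProjOfRank.rank_eq (hP : IsProjOfRank P k) : P.rank = k := hP.2.2

theorem IsProjOfRank.trace_eq (hP : IsProjOfRank P k) : P.trace = k := by
  rw [trace_eq_rank_of_isIdempotentElem hP.isIdempotentElem, hP.rank_eq]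

theorem IsProjOfRank.eq_zero (hP : IsProjOfRank P 0) : P = 0 := by
  rw [← frobNorm_eq_zero, ← sq_eq_zero_iff, frobNorm_sq_eq_trace, hP.isSymm.eq,
    hP.isIdempotentElem.eq, hP.trace_eq, Nat.cast_zero]

/-- `IsTopKProj` elaborates `A * P'` through the (defeq) `CStarMatrix` multiplication instance;
this restatement uses the usual one. -/
theorem IsTopKProj.frobNorm_mul_le {A : Matrix I (Fin d) ℝ} {P' : Matrix (Fin d) (Fin d) ℝ}
    (hP : IsTopKProj A k P) (hP' : IsProjOfRank P' k) : frobNorm (A * P') ≤ frobNorm (A * P) :=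
  hP.2 P' hP'

theorem IsTopKProj.mul_eq_self {A : Matrix I (Fin d) ℝ} (hP : IsTopKProj A A.rank P) :
    A * P = A := by
  have hPs := hP.1.isSymm
  have hPi := hP.1.isIdempotentElem
  have hA : frobNorm A ≤ frobNorm (A * P) := by
    have := hP.frobNorm_mul_le ⟨isSymm_orthProjMatrix (rowSpace A),
      (isStarProjection_orthProjMatrix _).isIdempotentElem,
      by rw [rank_orthProjMatrix, finrank_rowSpace]⟩
    rwa [mul_orthProjMatrix_rowSpace] at this
  have hsplit := frobNorm_sq_eq_add_of_isIdempotentElem A hPs hPi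
  have hres : frobNorm (A * (1 - P)) = 0 := by
    nlinarith [frobNorm_mul_le_of_isIdempotentElem A hPs hPi, frobNorm_nonneg (A * P),
      frobNorm_nonneg (A * (1 - P))]
  rwa [frobNorm_eq_zero, Matrix.mul_sub, Matrix.mul_one, sub_eq_zero, eq_comm] at hres

theorem IsTopKProj.range_eq_rowSpace {A : Matrix I (Fin d) ℝ} (hP : IsTopKProj A A.rank P) :
    LinearMap.range P.mulVecLin = rowSpace A := by
  have hrows := (mul_eq_self_iff_mulVec_row hP.1.isSymm).1 hP.mul_eq_self
  refine (Submodule.eq_of_le_of_finrank_eq ?_ ?_).symm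
  · refine Submodule.span_le.2 ?_
    rintro _ ⟨i, rfl⟩
    exact ⟨A i, hrows i⟩
  · rw [finrank_rowSpace]
    exact hP.1.rank_eq.symm

theorem IsTopKProj.frobNorm_mul_one_sub_le {X : Matrix I (Fin d) ℝ} {Q : Matrix (Fin d) (Fin d) ℝ}
    (hQ : IsTopKProj X k Q) (hP : IsProjOfRank P k) :
    frobNorm (X * (1 - Q)) ≤ frobNorm (X * (1 - P)) := by
  have hPQ := hQ.frobNorm_mul_le hP
  have hsplitP := frobNorm_sq_eq_add_of_isIdempotentElem X hP.isSymm hP.isIdempotentElem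
  have hsplitQ := frobNorm_sq_eq_add_of_isIdempotentElem X hQ.1.isSymm hQ.1.isIdempotentElem
  exact (pow_le_pow_iff_left₀ (frobNorm_nonneg _) (frobNorm_nonneg _) two_ne_zero).1
    (by nlinarith [pow_le_pow_left₀ (frobNorm_nonneg _) hPQ 2])

theorem frobNorm_mul_one_sub_le_two_mul {X Y Z : Matrix I (Fin d) ℝ}
    {Q : Matrix (Fin d) (Fin d) ℝ} (hX : X = Y + Z) (hQ : IsTopKProj X k Q)
    (hP : IsProjOfRank P k) (hYP : Y * P = Y) :
    frobNorm (Y * (1 - Q)) ≤ 2 * frobNorm Z := by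
  have hXP : X * (1 - P) = Z * (1 - P) := by
    rw [hX, Matrix.add_mul, Matrix.mul_sub Y, Matrix.mul_one, hYP, sub_self, zero_add]
  have hZP := frobNorm_mul_le_of_isIdempotentElem Z (isSymm_one.sub hP.isSymm)
    hP.isIdempotentElem.one_sub
  have hZQ := frobNorm_mul_le_of_isIdempotentElem Z (isSymm_one.sub hQ.1.isSymm)
    hQ.1.isIdempotentElem.one_sub
  calc frobNorm (Y * (1 - Q)) = frobNorm (X * (1 - Q) - Z * (1 - Q)) := by
        rw [hX, Matrix.add_mul, add_sub_cancel_right]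
    _ ≤ frobNorm (X * (1 - Q)) + frobNorm (Z * (1 - Q)) := frobNorm_sub_le _ _
    _ ≤ frobNorm (X * (1 - P)) + frobNorm (Z * (1 - Q)) := by
        gcongr
        exact hQ.frobNorm_mul_one_sub_le hP
    _ ≤ 2 * frobNorm Z := by linarith [hXP ▸ hZP]

end TopKProj

theorem stmt4_general (n d k : ℕ) (X Y Z : Matrix (Fin n) (Fin d) ℝ)
    (PV PVhat : Matrix (Fin d) (Fin d) ℝ)
    (hXYZ : X = Y + Z) (hrank : Y.rank = k)
    (hPV : IsTopKProj Y k PV) (hPVhat : IsTopKProj X k PVhat) :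
    frobNorm (PV - PVhat) ≤ 2 * Real.sqrt 2 * frobNorm Z / singVal Y k := by
  subst hrank
  have hdist : frobNorm (PV - PVhat) = √2 * frobNorm (PV * (1 - PVhat)) :=
    frobNorm_sub_eq_of_trace_eq hPV.1.isSymm hPV.1.isIdempotentElem hPVhat.1.isSymm
      hPVhat.1.isIdempotentElem (by rw [hPV.1.trace_eq, hPVhat.1.trace_eq])
  rcases Nat.eq_zero_or_pos Y.rank with hY | hY
  · have hPV0 : PV = 0 := IsProjOfRank.eq_zero (hY ▸ hPV.1)
    rw [hdist, hPV0, Matrix.zero_mul, frobNorm_eq_zero.2 rfl, mul_zero]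
    exact div_nonneg (by positivity [frobNorm_nonneg Z]) (singVal_nonneg Y _)
  have hcols : LinearMap.range (PV * (1 - PVhat)).mulVecLin ≤ rowSpace Y := by
    rw [mulVecLin_mul, ← hPV.range_eq_rowSpace]
    exact LinearMap.range_comp_le_range _ _
  have hkey : minGain Y (rowSpace Y) * frobNorm (PV * (1 - PVhat)) ≤ 2 * frobNorm Z := by
    refine (minGain_mul_frobNorm_le hcols).trans ?_
    rw [← Matrix.mul_assoc, hPV.mul_eq_self]
    exact frobNorm_mul_one_sub_le_two_mul hXYZ hPVhat hPV.1 hPV.mul_eq_self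
  rw [hdist, singVal_rank_eq_minGain_rowSpace hY, le_div_iff₀ (minGain_rowSpace_pos hY)]
  calc √2 * frobNorm (PV * (1 - PVhat)) * minGain Y (rowSpace Y)
      = √2 * (minGain Y (rowSpace Y) * frobNorm (PV * (1 - PVhat))) := by ring
    _ ≤ √2 * (2 * frobNorm Z) := by gcongr
    _ = 2 * √2 * frobNorm Z := by ring

/-- Frobenius-norm perturbation bound for the top-`k` right singular
subspace, when `X = Y + Z`, `Y` has rank `k`, and the row space of `Y` is
orthogonal to the row space of `Z` (i.e. `Y Zᵀ = 0`). -/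
theorem stmt4 (n d k : ℕ) (X Y Z : Matrix (Fin n) (Fin d) ℝ)
    (PV PVhat : Matrix (Fin d) (Fin d) ℝ)
    (hXYZ : X = Y + Z) (hrank : Y.rank = k) (horth : Y * Z.transpose = 0)
    (hPV : IsTopKProj Y k PV) (hPVhat : IsTopKProj X k PVhat)
    (hgap : 2 * specNorm Z ^ 2 ≤ singVal Y k ^ 2) :
    frobNorm (PV - PVhat) ≤ 2 * Real.sqrt 2 * frobNorm Z / singVal Y k :=
  stmt4_general n d k X Y Z PV PVhat hXYZ hrank hPV hPVhat
end
end

section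
/- Let v_1,…,v_k be unit vectors in ℝ^d with max_{i≠j} |⟨vᵢ,vⱼ⟩| ≤ α ≤ 1/20, and let u_1,…,u_k be the output of the Gram–Schmidt process applied to them. Then for every i ∈ [k] there exist a scalar λ_{i−1} with |λ_{i−1}| ≤ α(1 + 4α) and a vector w_i with ‖w_i‖₂ ≤ 2α², such that u_i = v_i + λ_{i−1}v_{i−1} + w_i. -/
open MeasureTheory Finset
open scoped RealInnerProductSpace

noncomputable section
open Classical

/-- the (one-step) Gram–Schmidt process `u 0 = v 0`,
`u (i+1) = v (i+1) − ⟪u i, v (i+1)⟫ • u i` applied to nearly orthogonal unit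
vectors satisfies `u i = v i + λ_{i−1} v_{i−1} + w i` with `|λ_{i−1}| ≤ α(1+4α)`
and `‖w i‖ ≤ 2α²` (for `i = 0`, with `λ = 0`, `w = 0`, using `0 - 1 = 0` in `ℕ`). -/
theorem stmt6 (d k : ℕ) (α : ℝ) (hα0 : 0 ≤ α) (hα1 : α ≤ 1 / 20)
    (v : ℕ → EuclideanSpace ℝ (Fin d))
    (hunit : ∀ i < k, ‖v i‖ = 1)
    (hip : ∀ i j, i < k → j < k → i ≠ j → |(⟪v i, v j⟫ : ℝ)| ≤ α)
    (u : ℕ → EuclideanSpace ℝ (Fin d))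
    (hu0 : u 0 = v 0)
    (hurec : ∀ i, u (i + 1) = v (i + 1) - ⟪u i, v (i + 1)⟫ • u i) :
    ∀ i < k, ∃ (lam : ℝ) (w : EuclideanSpace ℝ (Fin d)),
      |lam| ≤ α * (1 + 4 * α) ∧ ‖w‖ ≤ 2 * α ^ 2 ∧
      u i = v i + lam • v (i - 1) + w := by
  intro i
  induction i with
  | zero =>
    intro hk
    exact ⟨0, 0, by simpa using mul_nonneg hα0 (by nlinarith),
      by simpa using sq_nonneg α, by simp [hu0]⟩
  | succ n ih =>
    intro hk
    have hn : n < k := Nat.lt_of_succ_lt hk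
    have hn1 : n - 1 < k := lt_of_le_of_lt (Nat.sub_le n 1) hn
    obtain ⟨lam, w, hlam, hw, hu⟩ := ih hn
    set c : ℝ := ⟪u n, v (n + 1)⟫ with hc
    have hcexp : c = ⟪v n, v (n+1)⟫ + lam * ⟪v (n-1), v (n+1)⟫ + ⟪w, v (n+1)⟫ := by
      rw [hc, hu, inner_add_left, inner_add_left, real_inner_smul_left]
    have h1 : |(⟪v n, v (n+1)⟫ : ℝ)| ≤ α := hip n (n+1) hn hk (by omega)
    have h2 : |(⟪v (n-1), v (n+1)⟫ : ℝ)| ≤ α := hip (n-1) (n+1) hn1 hk (by omega)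
    have h3 : |(⟪w, v (n+1)⟫ : ℝ)| ≤ 2 * α ^ 2 := by
      calc |(⟪w, v (n+1)⟫ : ℝ)| ≤ ‖w‖ * ‖v (n+1)‖ := abs_real_inner_le_norm _ _
        _ = ‖w‖ := by rw [hunit _ hk, mul_one]
        _ ≤ 2 * α ^ 2 := hw
    have hmul : |lam * ⟪v (n-1), v (n+1)⟫| ≤ (α * (1 + 4 * α)) * α := by
      rw [abs_mul]
      exact mul_le_mul hlam h2 (abs_nonneg _) (by nlinarith)
    have hcb : |c| ≤ α * (1 + 4 * α) := by
      rw [hcexp]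
      have habs : |(⟪v n, v (n+1)⟫ : ℝ) + lam * ⟪v (n-1), v (n+1)⟫ + ⟪w, v (n+1)⟫|
          ≤ |(⟪v n, v (n+1)⟫ : ℝ)| + |lam * ⟪v (n-1), v (n+1)⟫| + |(⟪w, v (n+1)⟫ : ℝ)| :=
        (abs_add_le _ _).trans (by gcongr; exact abs_add_le _ _)
      nlinarith [mul_nonneg hα0 hα0, mul_nonneg (mul_nonneg hα0 hα0) hα0]
    refine ⟨-c, (-c) • (lam • v (n-1) + w), ?_, ?_, ?_⟩
    · simpa using hcb
    · have hb : ‖lam • v (n-1) + w‖ ≤ α * (1 + 4 * α) + 2 * α ^ 2 := by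
        calc ‖lam • v (n-1) + w‖ ≤ ‖lam • v (n-1)‖ + ‖w‖ := norm_add_le _ _
          _ = |lam| * ‖v (n-1)‖ + ‖w‖ := by rw [norm_smul, Real.norm_eq_abs]
          _ = |lam| + ‖w‖ := by rw [hunit _ hn1, mul_one]
          _ ≤ α * (1 + 4 * α) + 2 * α ^ 2 := add_le_add hlam hw
      calc ‖(-c) • (lam • v (n-1) + w)‖ = |c| * ‖lam • v (n-1) + w‖ := by
            rw [norm_smul, Real.norm_eq_abs, abs_neg]
        _ ≤ (α * (1 + 4 * α)) * (α * (1 + 4 * α) + 2 * α ^ 2) :=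
            mul_le_mul hcb hb (norm_nonneg _) (by nlinarith)
        _ ≤ 2 * α ^ 2 := by
            nlinarith [mul_nonneg hα0 hα0, mul_nonneg (mul_nonneg hα0 hα0) hα0,
              mul_le_mul_of_nonneg_left hα1 (mul_nonneg hα0 hα0),
              mul_le_mul_of_nonneg_left hα1 (mul_nonneg (mul_nonneg hα0 hα0) hα0)]
    · rw [hurec n, show n + 1 - 1 = n from rfl, ← hc, hu]
      module
end
end
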